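/- Let N ≥ 1, let M be a real N×N symmetric matrix, and let λ > 0 satisfy λ·‖y‖² ≤ yᵀ M y for every y ∈ ℝ^N. Let α, β, k > 0 and 0 < p < q with k·p < 1 and k·q > 1, and let γ := Γ((1−k·p)/(q−p))·Γ((k·q−1)/(q−p)) / (α^k·Γ(k)·(q−p)) · (α/β)^((1−k·p)/(q−p)). Let T_c > 0, ζ_x ≥ 0 and κ₁, …, κ_N, κ_x reals with κᵢ ≥ κ_x for all i and κ_x ≥ N·γ/(λ·T_c). Suppose x̃ : ℝ → ℝ^N is such that for every t ≥ 0 and every index i, the i-th component of x̃ is differentiable at t with derivative x̃ᵢ'(t) = −κᵢ·((α·|eᵢ(t)|^p + β·|eᵢ(t)|^q)^k + ζ_x)·sign(eᵢ(t)), where e(t) := M ⬝ x̃(t). Then x̃(t) = 0 for all t ≥ T_c. (The position observation error of the distributed fixed-time observer, after the velocity error has vanished, converges to the origin before the predefined time T_c = T_{c₂} and stays there; Theorem 3, position part.) -/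

import Mathlib

/-!
`V = xᵀ M x` is a Lyapunov function. By symmetry of `M`, `V' = 2 ẋ ⬝ e` with `e = M x`, which
equals `-2 ∑ κᵢ (G |eᵢ| + ζₓ) |eᵢ|` for `G s = (α sᵖ + β s^q)ᵏ`. Cauchy–Schwarz and the
eigenvalue bound give `λ V ≤ |e|²`, so some `|eᵢ|` is at least `s = √(λ V / N)`; as `G s * s` is
monotone, `V' ≤ -2 κₓ G(s) s`, i.e. `s' ≤ -(λ κₓ / N) G(s)` while `s > 0`. Then `s` vanishes
before time `N / (λ κₓ) * ∫₀^∞ ds / G(s)`, and the substitutions `s = (α/β)^(1/(q-p)) x`,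
`t = x^(q-p)`, `t = u / (1 - u)` turn this integral into the Beta integral that produces `γ`.
-/

open MeasureTheory Set
open Matrix Real

section BetaIntegrals

variable {a b : ℝ}

lemma ofReal_rpow_mul_one_sub_rpow {x : ℝ} (hx : x ∈ Icc (0 : ℝ) 1) :
    ((x ^ (a - 1) * (1 - x) ^ (b - 1) : ℝ) : ℂ) =
      (x : ℂ) ^ ((a : ℂ) - 1) * (1 - (x : ℂ)) ^ ((b : ℂ) - 1) := by
  push_cast
  rw [Complex.ofReal_cpow hx.1, Complex.ofReal_cpow (sub_nonneg.2 hx.2)]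
  push_cast
  ring

theorem integrableOn_rpow_mul_one_sub_rpow (ha : 0 < a) (hb : 0 < b) :
    IntegrableOn (fun u : ℝ => u ^ (a - 1) * (1 - u) ^ (b - 1)) (Ioo 0 1) := by
  have hc : IntegrableOn (fun x : ℝ => ((x : ℂ) ^ ((a : ℂ) - 1) * (1 - (x : ℂ)) ^ ((b : ℂ) - 1)).re)
      (Ioc 0 1) :=
    (Complex.betaIntegral_convergent (u := a) (v := b) (by simpa) (by simpa)).1.re
  refine (hc.congr_fun (fun x hx => ?_) measurableSet_Ioc).mono_set Ioo_subset_Ioc_self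
  rw [← ofReal_rpow_mul_one_sub_rpow (Ioc_subset_Icc_self hx)]
  rfl

theorem integral_rpow_mul_one_sub_rpow (ha : 0 < a) (hb : 0 < b) :
    ∫ u in Ioo (0 : ℝ) 1, u ^ (a - 1) * (1 - u) ^ (b - 1) = ProbabilityTheory.beta a b := by
  rw [ProbabilityTheory.beta_eq_betaIntegralReal a b ha hb, Complex.betaIntegral,
    ← integral_Ioc_eq_integral_Ioo, ← intervalIntegral.integral_of_le zero_le_one,
    ← intervalIntegral.integral_congr (fun x hx => ofReal_rpow_mul_one_sub_rpow
      (a := a) (b := b) (by rwa [uIcc_of_le zero_le_one] at hx)),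
    intervalIntegral.integral_ofReal, Complex.ofReal_re]

lemma injOn_div_one_sub : InjOn (fun u : ℝ => u / (1 - u)) (Iio 1) := by
  intro u hu v hv huv
  have hu' : 1 - u ≠ 0 := (sub_pos.2 hu).ne'
  have hv' : 1 - v ≠ 0 := (sub_pos.2 hv).ne'
  field_simp at huv
  linarith

lemma image_div_one_sub_Ioo : (fun u : ℝ => u / (1 - u)) '' Ioo 0 1 = Ioi 0 := by
  ext t
  constructor
  · rintro ⟨u, ⟨hu0, hu1⟩, rfl⟩
    exact div_pos hu0 (sub_pos.2 hu1)
  · intro (ht : 0 < t)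
    refine ⟨t / (1 + t), ⟨by positivity, (div_lt_one (by positivity)).2 (by linarith)⟩, ?_⟩
    have : 1 - t / (1 + t) = (1 + t)⁻¹ := by field_simp; ring
    simp only [this]
    field_simp

lemma abs_inv_one_sub_sq_mul_comp_div_one_sub {u : ℝ} (hu : u ∈ Ioo (0 : ℝ) 1) :
    |((1 - u) ^ 2)⁻¹| * ((u / (1 - u)) ^ (a - 1) * (1 + u / (1 - u)) ^ (-(a + b))) =
      u ^ (a - 1) * (1 - u) ^ (b - 1) := by
  have hw : 0 < 1 - u := sub_pos.2 hu.2
  have h1 : 1 + u / (1 - u) = (1 - u)⁻¹ := by field_simp; ring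
  rw [abs_of_pos (by positivity), h1, div_rpow hu.1.le hw.le, inv_rpow hw.le, ← rpow_neg hw.le,
    ← rpow_natCast, ← rpow_neg hw.le, div_eq_mul_inv, ← rpow_neg hw.le]
  have e : (1 - u) ^ (-((2 : ℕ) : ℝ)) * (1 - u) ^ (-(a - 1)) * (1 - u) ^ (-(-(a + b))) =
      (1 - u) ^ (b - 1) := by
    rw [← rpow_add hw, ← rpow_add hw]; congr 1; push_cast; ring
  rw [← e]; ring

lemma hasDerivWithinAt_div_one_sub {u : ℝ} (hu : u ∈ Ioo (0 : ℝ) 1) :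
    HasDerivWithinAt (fun u : ℝ => u / (1 - u)) ((1 - u) ^ 2)⁻¹ (Ioo 0 1) u := by
  have hw : 1 - u ≠ 0 := (sub_pos.2 hu.2).ne'
  have h := (hasDerivAt_id' u).fun_div ((hasDerivAt_const u (1 : ℝ)).fun_sub (hasDerivAt_id' u)) hw
  refine (h.congr_deriv ?_).hasDerivWithinAt
  field_simp
  ring

theorem integrableOn_rpow_mul_one_add_rpow_neg (ha : 0 < a) (hb : 0 < b) :
    IntegrableOn (fun t : ℝ => t ^ (a - 1) * (1 + t) ^ (-(a + b))) (Ioi 0) := by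
  rw [← image_div_one_sub_Ioo, integrableOn_image_iff_integrableOn_abs_deriv_smul measurableSet_Ioo
    (fun _ hu => hasDerivWithinAt_div_one_sub hu) (injOn_div_one_sub.mono Ioo_subset_Iio_self)]
  exact (integrableOn_rpow_mul_one_sub_rpow ha hb).congr_fun
    (fun u hu => (abs_inv_one_sub_sq_mul_comp_div_one_sub hu).symm) measurableSet_Ioo

theorem integral_rpow_mul_one_add_rpow_neg (ha : 0 < a) (hb : 0 < b) :
    ∫ t in Ioi (0 : ℝ), t ^ (a - 1) * (1 + t) ^ (-(a + b)) = ProbabilityTheory.beta a b := by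
  rw [← image_div_one_sub_Ioo, integral_image_eq_integral_abs_deriv_smul measurableSet_Ioo
    (fun _ hu => hasDerivWithinAt_div_one_sub hu) (injOn_div_one_sub.mono Ioo_subset_Iio_self),
    ← integral_rpow_mul_one_sub_rpow ha hb]
  exact setIntegral_congr_fun measurableSet_Ioo fun u hu =>
    abs_inv_one_sub_sq_mul_comp_div_one_sub hu

lemma mul_rpow_sub_one_mul_comp_rpow {r x : ℝ} (hx : 0 < x) :
    (r * x ^ (r - 1)) * ((x ^ r) ^ (a - 1) * (1 + x ^ r) ^ (-(a + b))) =
      r * (x ^ (r * a - 1) * (1 + x ^ r) ^ (-(a + b))) := by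
  have h : x ^ (r - 1) * x ^ (r * (a - 1)) = x ^ (r * a - 1) := by
    rw [← rpow_add hx]; ring_nf
  rw [← rpow_mul hx.le, ← h]
  ring

theorem integrableOn_rpow_mul_one_add_rpow_rpow_neg (ha : 0 < a) (hb : 0 < b) {r : ℝ}
    (hr : 0 < r) :
    IntegrableOn (fun x : ℝ => x ^ (r * a - 1) * (1 + x ^ r) ^ (-(a + b))) (Ioi 0) := by
  have h := (integrableOn_Ioi_comp_rpow_iff _ hr.ne').2
    (integrableOn_rpow_mul_one_add_rpow_neg ha hb)
  refine IntegrableOn.congr_fun (h.const_mul r⁻¹) (fun x (hx : 0 < x) => ?_) measurableSet_Ioi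
  simp only [smul_eq_mul, abs_of_pos hr, mul_rpow_sub_one_mul_comp_rpow hx]
  field_simp

theorem integral_rpow_mul_one_add_rpow_rpow_neg (ha : 0 < a) (hb : 0 < b) {r : ℝ} (hr : 0 < r) :
    ∫ x in Ioi (0 : ℝ), x ^ (r * a - 1) * (1 + x ^ r) ^ (-(a + b)) =
      ProbabilityTheory.beta a b / r := by
  have h := integral_comp_rpow_Ioi_of_pos (g := fun t : ℝ => t ^ (a - 1) * (1 + t) ^ (-(a + b))) hr
  rw [setIntegral_congr_fun measurableSet_Ioi fun x (hx : 0 < x) =>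
      (smul_eq_mul _ _).trans (mul_rpow_sub_one_mul_comp_rpow hx), integral_const_mul,
    integral_rpow_mul_one_add_rpow_neg ha hb] at h
  rw [eq_div_iff hr.ne', ← h, mul_comm]

lemma inv_add_rpow_rpow_comp_mul {α β c x p r k : ℝ} (hα : 0 < α) (hc : 0 < c) (hx : 0 < x)
    (hcr : β * c ^ r = α) :
    ((α * (c * x) ^ p + β * (c * x) ^ (p + r)) ^ k)⁻¹ =
      (α ^ k * c ^ (k * p))⁻¹ * (x ^ (-(k * p)) * (1 + x ^ r) ^ (-k)) := by
  have hsum : α * (c * x) ^ p + β * (c * x) ^ (p + r) = α * c ^ p * (x ^ p * (1 + x ^ r)) := by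
    rw [mul_rpow hc.le hx.le, mul_rpow hc.le hx.le, rpow_add hc, rpow_add hx, ← hcr]
    ring
  rw [hsum, mul_rpow (by positivity) (by positivity), mul_rpow hα.le (by positivity),
    mul_rpow (by positivity) (by positivity), ← rpow_mul hc.le, ← rpow_mul hx.le,
    rpow_neg hx.le, rpow_neg (by positivity), mul_comm p k]
  simp only [mul_inv]

theorem integrableOn_inv_add_rpow_rpow_and_integral_eq {α β k p q : ℝ} (hα : 0 < α) (hβ : 0 < β)
    (hpq : p < q) (hkp : k * p < 1) (hkq : 1 < k * q) :
    IntegrableOn (fun s : ℝ => ((α * s ^ p + β * s ^ q) ^ k)⁻¹) (Ioi 0) ∧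
    ∫ s in Ioi (0 : ℝ), ((α * s ^ p + β * s ^ q) ^ k)⁻¹ =
      Real.Gamma ((1 - k * p) / (q - p)) * Real.Gamma ((k * q - 1) / (q - p)) /
        (α ^ k * Real.Gamma k * (q - p)) * (α / β) ^ ((1 - k * p) / (q - p)) := by
  set r := q - p with hr_def
  have hr : 0 < r := sub_pos.2 hpq
  set a := (1 - k * p) / r with ha_def
  set b := (k * q - 1) / r with hb_def
  have ha : 0 < a := div_pos (by linarith) hr
  have hb : 0 < b := div_pos (by linarith) hr
  have hra : r * a - 1 = -(k * p) := by rw [ha_def]; field_simp; ring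
  have hab : a + b = k := by
    rw [ha_def, hb_def, ← add_div, div_eq_iff hr.ne', hr_def]; ring
  set c := (α / β) ^ r⁻¹ with hc_def
  have hc : 0 < c := by positivity
  have hcr : β * c ^ r = α := by
    rw [hc_def, ← rpow_mul (div_pos hα hβ).le, inv_mul_cancel₀ hr.ne', rpow_one]; field_simp
  have hca : c * (c ^ (k * p))⁻¹ = (α / β) ^ a := by
    rw [← div_eq_mul_inv, ← rpow_one_sub' hc.le (by linarith), hc_def,
      ← rpow_mul (div_pos hα hβ).le]
    congr 1; rw [ha_def]; field_simp
  have hscaled : EqOn (fun x => ((α * (c * x) ^ p + β * (c * x) ^ q) ^ k)⁻¹)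
      (fun x => (α ^ k * c ^ (k * p))⁻¹ * (x ^ (r * a - 1) * (1 + x ^ r) ^ (-(a + b)))) (Ioi 0) :=
    fun x (hx : 0 < x) => by
      simp only [hra, hab, show q = p + r by ring, inv_add_rpow_rpow_comp_mul hα hc hx hcr]
  clear_value a b c r
  constructor
  · rw [← mul_zero c, ← integrableOn_Ioi_comp_mul_left_iff _ 0 hc]
    refine IntegrableOn.congr_fun ?_ hscaled.symm measurableSet_Ioi
    exact (integrableOn_rpow_mul_one_add_rpow_rpow_neg ha hb hr).const_mul _
  · have hscale := integral_comp_mul_left_Ioi (fun s : ℝ => ((α * s ^ p + β * s ^ q) ^ k)⁻¹) 0 hc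
    rw [mul_zero, smul_eq_mul, setIntegral_congr_fun measurableSet_Ioi hscaled, integral_const_mul,
      integral_rpow_mul_one_add_rpow_rpow_neg ha hb hr, eq_inv_mul_iff_mul_eq₀ hc.ne'] at hscale
    rw [← hca, ← hscale, ProbabilityTheory.beta, hab]
    ring

end BetaIntegrals

lemma Real.self_mul_sign (x : ℝ) : x * Real.sign x = |x| := by
  rcases lt_trichotomy x 0 with hx | rfl | hx
  · rw [Real.sign_of_neg hx, abs_of_neg hx, mul_neg_one]
  · simp
  · rw [Real.sign_of_pos hx, abs_of_pos hx, mul_one]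

section QuadraticForm

variable {n : Type*} [Fintype n] {M : Matrix n n ℝ} {lam : ℝ}

theorem hasDerivAt_dotProduct_mulVec_self (hM : M.IsSymm) {x : ℝ → n → ℝ} {x' : n → ℝ} {t : ℝ}
    (hx : ∀ i, HasDerivAt (fun s => x s i) (x' i) t) :
    HasDerivAt (fun s => x s ⬝ᵥ M *ᵥ x s) (2 * (x' ⬝ᵥ M *ᵥ x t)) t := by
  have hMx : ∀ i, HasDerivAt (fun s => (M *ᵥ x s) i) ((M *ᵥ x') i) t := fun i =>
    HasDerivAt.fun_sum fun j _ => (hx j).const_mul (M i j)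
  have h : HasDerivAt (fun s => x s ⬝ᵥ M *ᵥ x s) (x' ⬝ᵥ M *ᵥ x t + x t ⬝ᵥ M *ᵥ x') t := by
    simp only [dotProduct, ← Finset.sum_add_distrib]
    exact HasDerivAt.fun_sum fun i _ => (hx i).mul (hMx i)
  have hMt : x t ᵥ* M = M *ᵥ x t := by simpa [hM.eq] using vecMul_transpose M (x t)
  rwa [dotProduct_mulVec (x t), hMt, dotProduct_comm (M *ᵥ x t), ← two_mul] at h

theorem dotProduct_mulVec_self_nonneg (hquad : ∀ y : n → ℝ, lam * (y ⬝ᵥ y) ≤ y ⬝ᵥ M *ᵥ y)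
    (hlam : 0 ≤ lam) (y : n → ℝ) : 0 ≤ y ⬝ᵥ M *ᵥ y :=
  (mul_nonneg hlam (by simpa using dotProduct_self_star_nonneg y)).trans (hquad y)

theorem eq_zero_of_dotProduct_mulVec_self_eq_zero
    (hquad : ∀ y : n → ℝ, lam * (y ⬝ᵥ y) ≤ y ⬝ᵥ M *ᵥ y) (hlam : 0 < lam) {y : n → ℝ}
    (hy : y ⬝ᵥ M *ᵥ y = 0) : y = 0 := by
  have h : lam * (y ⬝ᵥ y) ≤ lam * 0 := by rw [mul_zero, ← hy]; exact hquad y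
  exact dotProduct_self_eq_zero.1 ((le_of_mul_le_mul_left h hlam).antisymm
    (by simpa using dotProduct_self_star_nonneg y))

theorem mul_dotProduct_mulVec_self_le (hquad : ∀ y : n → ℝ, lam * (y ⬝ᵥ y) ≤ y ⬝ᵥ M *ᵥ y)
    (hlam : 0 < lam) (y : n → ℝ) :
    lam * (y ⬝ᵥ M *ᵥ y) ≤ M *ᵥ y ⬝ᵥ M *ᵥ y := by
  have hcs : (y ⬝ᵥ M *ᵥ y) ^ 2 ≤ (y ⬝ᵥ y) * (M *ᵥ y ⬝ᵥ M *ᵥ y) := by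
    simpa [dotProduct, pow_two] using Finset.sum_mul_sq_le_sq_mul_sq Finset.univ y (M *ᵥ y)
  have hee : 0 ≤ M *ᵥ y ⬝ᵥ M *ᵥ y := by simpa using dotProduct_self_star_nonneg (M *ᵥ y)
  rcases (dotProduct_mulVec_self_nonneg hquad hlam.le y).eq_or_lt with hV0 | hV0
  · rw [← hV0, mul_zero]
    exact hee
  refine le_of_mul_le_mul_left ?_ hV0
  calc (y ⬝ᵥ M *ᵥ y) * (lam * (y ⬝ᵥ M *ᵥ y)) = lam * (y ⬝ᵥ M *ᵥ y) ^ 2 := by ring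
    _ ≤ lam * (y ⬝ᵥ y) * (M *ᵥ y ⬝ᵥ M *ᵥ y) := by rw [mul_assoc]; gcongr
    _ ≤ (y ⬝ᵥ M *ᵥ y) * (M *ᵥ y ⬝ᵥ M *ᵥ y) := by gcongr; exact hquad y

theorem exists_sqrt_div_card_le_abs [Nonempty n] {a : ℝ} {e : n → ℝ} (h : a ≤ e ⬝ᵥ e) :
    ∃ i, √(a / Fintype.card n) ≤ |e i| := by
  have hsum : ∑ _i : n, a / Fintype.card n ≤ ∑ i, e i * e i := by
    rw [Finset.sum_const, Finset.card_univ, nsmul_eq_mul, mul_div_cancel₀ _ (by positivity)]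
    exact h
  obtain ⟨i, -, hi⟩ := Finset.exists_le_of_sum_le Finset.univ_nonempty hsum
  exact ⟨i, (Real.sqrt_mul_self_eq_abs (e i)) ▸ Real.sqrt_le_sqrt hi⟩

end QuadraticForm

theorem continuous_rpow_add_rpow_rpow {α β k p q : ℝ} (hk : 0 ≤ k) (hp : 0 ≤ p) (hq : 0 ≤ q) :
    Continuous (fun s : ℝ => (α * s ^ p + β * s ^ q) ^ k) :=
  ((continuous_const.mul (continuous_id.rpow_const fun _ => Or.inr hp)).add
    (continuous_const.mul (continuous_id.rpow_const fun _ => Or.inr hq))).rpow_const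
    fun _ => Or.inr hk

theorem monotoneOn_rpow_add_rpow_rpow_mul_self {α β k p q : ℝ} (hα : 0 ≤ α) (hβ : 0 ≤ β)
    (hk : 0 ≤ k) (hp : 0 ≤ p) (hq : 0 ≤ q) :
    MonotoneOn (fun s : ℝ => (α * s ^ p + β * s ^ q) ^ k * s) (Ici 0) := by
  intro s (hs : 0 ≤ s) s' (hs' : 0 ≤ s') hss'
  have hsum : α * s ^ p + β * s ^ q ≤ α * s' ^ p + β * s' ^ q := by gcongr
  exact mul_le_mul (rpow_le_rpow (by positivity) hsum hk) hss' hs (by positivity)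

theorem mul_mul_self_le_sum {n : Type*} [Fintype n] {F : ℝ → ℝ} (hF : ∀ s, 0 ≤ s → 0 ≤ F s)
    (hF_mono : MonotoneOn (fun s => F s * s) (Ici 0)) {κ : n → ℝ} {κx ζ s : ℝ} (hκx : 0 ≤ κx)
    (hκ : ∀ i, κx ≤ κ i) (hζ : 0 ≤ ζ) {e : n → ℝ} {i : n} (hs : 0 ≤ s) (hsi : s ≤ |e i|) :
    κx * (F s * s) ≤ ∑ j, κ j * (F |e j| + ζ) * |e j| := by
  have hterm : ∀ j, 0 ≤ κ j * (F |e j| + ζ) * |e j| := fun j =>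
    mul_nonneg (mul_nonneg (hκx.trans (hκ j)) (add_nonneg (hF _ (abs_nonneg _)) hζ)) (abs_nonneg _)
  calc κx * (F s * s) ≤ κx * (F |e i| * |e i|) :=
        mul_le_mul_of_nonneg_left (hF_mono hs (abs_nonneg (e i)) hsi) hκx
    _ ≤ κ i * (F |e i| + ζ) * |e i| := by
        rw [← mul_assoc]
        exact mul_le_mul_of_nonneg_right (mul_le_mul (hκ i) (le_add_of_nonneg_right hζ)
          (hF _ (abs_nonneg _)) (hκx.trans (hκ i))) (abs_nonneg _)
    _ ≤ ∑ j, κ j * (F |e j| + ζ) * |e j| :=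
        Finset.single_le_sum (fun j _ => hterm j) (Finset.mem_univ i)

theorem exists_hasDerivAt_dotProduct_mulVec_self_le {n : Type*} [Fintype n] [Nonempty n]
    {M : Matrix n n ℝ} (hM : M.IsSymm) {lam : ℝ} (hlam : 0 < lam)
    (hquad : ∀ y : n → ℝ, lam * (y ⬝ᵥ y) ≤ y ⬝ᵥ M *ᵥ y) {F : ℝ → ℝ} (hF : ∀ s, 0 ≤ s → 0 ≤ F s)
    (hF_mono : MonotoneOn (fun s => F s * s) (Ici 0)) {κ : n → ℝ} {κx ζ : ℝ} (hκx : 0 ≤ κx)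
    (hκ : ∀ i, κx ≤ κ i) (hζ : 0 ≤ ζ) {x : ℝ → n → ℝ} {t : ℝ}
    (hx : ∀ i, HasDerivAt (fun s => x s i)
      (-(κ i) * (F |(M *ᵥ x t) i| + ζ) * Real.sign ((M *ᵥ x t) i)) t) :
    ∃ V', HasDerivAt (fun s => x s ⬝ᵥ M *ᵥ x s) V' t ∧
      V' ≤ -2 * κx * (F √(lam / Fintype.card n * (x t ⬝ᵥ M *ᵥ x t)) *
        √(lam / Fintype.card n * (x t ⬝ᵥ M *ᵥ x t))) := by
  refine ⟨_, hasDerivAt_dotProduct_mulVec_self hM hx, ?_⟩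
  set e := M *ᵥ x t
  have hdiss : (fun i => -(κ i) * (F |e i| + ζ) * Real.sign (e i)) ⬝ᵥ e =
      -∑ i, κ i * (F |e i| + ζ) * |e i| := by
    simp only [dotProduct, ← Finset.sum_neg_distrib, ← Real.self_mul_sign]
    exact Finset.sum_congr rfl fun i _ => by ring
  obtain ⟨i, hi⟩ := exists_sqrt_div_card_le_abs (mul_dotProduct_mulVec_self_le hquad hlam (x t))
  rw [mul_div_right_comm] at hi
  have := mul_mul_self_le_sum hF hF_mono hκx hκ hζ (Real.sqrt_nonneg _) hi
  linarith

theorem hasDerivAt_integral_zero_of_integrableOn_Ioi {f : ℝ → ℝ} (hf_int : IntegrableOn f (Ioi 0))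
    (hf_cont : ContinuousOn f (Ioi 0)) {y : ℝ} (hy : 0 < y) :
    HasDerivAt (fun y => ∫ s in (0)..y, f s) (f y) y :=
  intervalIntegral.integral_hasDerivAt_right
    ((intervalIntegrable_iff_integrableOn_Ioc_of_le hy.le).2 (hf_int.mono_set Ioc_subset_Ioi_self))
    (hf_cont.stronglyMeasurableAtFilter isOpen_Ioi y hy) (hf_cont.continuousAt (Ioi_mem_nhds hy))

/-- With `P y = ∫₀ʸ 1 / g`, the function `t ↦ P (u t) + t` is antitone as long as `u > 0`,
so `u` cannot stay positive for longer than `∫₀^∞ 1 / g`. -/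
theorem eq_zero_of_hasDerivAt_le_neg {g u : ℝ → ℝ} {T : ℝ}
    (hg_pos : ∀ s, 0 < s → 0 < g s) (hg_cont : ContinuousOn g (Ioi 0))
    (hg_int : IntegrableOn (fun s => (g s)⁻¹) (Ioi 0))
    (hT : ∫ s in Ioi (0 : ℝ), (g s)⁻¹ ≤ T)
    (hu_nonneg : ∀ t, 0 ≤ u t) (hu_anti : AntitoneOn u (Ici 0))
    (hu_deriv : ∀ t, 0 ≤ t → 0 < u t → ∃ u', HasDerivAt u u' t ∧ u' ≤ -g (u t)) :
    ∀ t, T ≤ t → u t = 0 := by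
  have hginv_pos : ∀ s, 0 < s → 0 < (g s)⁻¹ := fun s hs => inv_pos.2 (hg_pos s hs)
  have hT0 : 0 ≤ T :=
    (setIntegral_nonneg measurableSet_Ioi fun s hs => (hginv_pos s hs).le).trans hT
  suffices hT_zero : u T = 0 from fun t ht =>
    le_antisymm ((hu_anti hT0 (hT0.trans ht) ht).trans hT_zero.le) (hu_nonneg t)
  by_contra hne
  have hpos : ∀ t ∈ Icc 0 T, 0 < u t := fun t ht =>
    ((hu_nonneg T).lt_of_ne' hne).trans_le (hu_anti ht.1 hT0 ht.2)
  choose! u' hu' hu'_le using hu_deriv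
  set P : ℝ → ℝ := fun y => ∫ s in (0)..y, (g s)⁻¹
  have hP : ∀ y, 0 < y → HasDerivAt P (g y)⁻¹ y := fun y =>
    hasDerivAt_integral_zero_of_integrableOn_Ioi hg_int (hg_cont.inv₀ fun s hs => (hg_pos s hs).ne')
  have hP_le : P (u 0) ≤ ∫ s in Ioi 0, (g s)⁻¹ := by
    show ∫ s in (0)..u 0, (g s)⁻¹ ≤ _
    rw [intervalIntegral.integral_of_le (hu_nonneg 0)]
    exact setIntegral_mono_set hg_int
      ((ae_restrict_iff' measurableSet_Ioi).2 (.of_forall fun s hs => (hginv_pos s hs).le))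
      Ioc_subset_Ioi_self.eventuallyLE
  have hP_pos : 0 < P (u T) := intervalIntegral.intervalIntegral_pos_of_pos_on
    ((intervalIntegrable_iff_integrableOn_Ioc_of_le (hu_nonneg T)).2
      (hg_int.mono_set Ioc_subset_Ioi_self))
    (fun s hs => hginv_pos s hs.1) (hpos T ⟨hT0, le_rfl⟩)
  have hΘ : ∀ t ∈ Icc 0 T, HasDerivAt (fun t => P (u t) + t) ((g (u t))⁻¹ * u' t + 1) t :=
    fun t ht => ((hP _ (hpos t ht)).comp t (hu' t ht.1 (hpos t ht))).add (hasDerivAt_id t)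
  have hΘ_nonpos : ∀ t ∈ Icc 0 T, (g (u t))⁻¹ * u' t + 1 ≤ 0 := fun t ht => by
    have hg := hg_pos _ (hpos t ht)
    calc (g (u t))⁻¹ * u' t + 1 ≤ (g (u t))⁻¹ * -g (u t) + 1 := by
          gcongr; exact hu'_le t ht.1 (hpos t ht)
      _ = 0 := by field_simp; ring
  have hΘ_anti := antitoneOn_of_hasDerivWithinAt_nonpos (convex_Icc 0 T)
    (fun t ht => (hΘ t ht).continuousAt.continuousWithinAt)
    (fun t ht => (hΘ t (interior_subset ht)).hasDerivWithinAt)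
    (fun t ht => hΘ_nonpos t (interior_subset ht))
  have := hΘ_anti ⟨le_rfl, hT0⟩ ⟨hT0, le_rfl⟩ hT0
  linarith

theorem eq_zero_of_hasDerivAt_le_neg_sqrt {G V : ℝ → ℝ} {c κ T : ℝ} (hc : 0 < c) (hκ : 0 < κ)
    (hG_pos : ∀ s, 0 < s → 0 < G s) (hG_cont : ContinuousOn G (Ioi 0))
    (hG_int : IntegrableOn (fun s => (G s)⁻¹) (Ioi 0))
    (hT : ∫ s in Ioi (0 : ℝ), (G s)⁻¹ ≤ c * κ * T) (hV_nonneg : ∀ t, 0 ≤ V t)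
    (hV : ∀ t, 0 ≤ t → ∃ V', HasDerivAt V V' t ∧ V' ≤ -2 * κ * (G √(c * V t) * √(c * V t))) :
    ∀ t, T ≤ t → V t = 0 := by
  choose! V' hV' hV'_le using hV
  have hV'_nonpos : ∀ t, 0 ≤ t → V' t ≤ 0 := fun t ht => by
    have hGs : 0 ≤ G √(c * V t) * √(c * V t) := by
      rcases (Real.sqrt_nonneg (c * V t)).eq_or_lt with h0 | h0
      · rw [← h0, mul_zero]
      · exact (mul_pos (hG_pos _ h0) h0).le
    nlinarith [hV'_le t ht]
  have hV_anti : AntitoneOn V (Ici 0) := antitoneOn_of_hasDerivWithinAt_nonpos (convex_Ici 0)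
    (fun t ht => (hV' t ht).continuousAt.continuousWithinAt)
    (fun t ht => (hV' t (interior_subset ht)).hasDerivWithinAt)
    (fun t ht => hV'_nonpos t (interior_subset ht))
  have hu := eq_zero_of_hasDerivAt_le_neg (g := fun s => c * κ * G s) (u := fun t => √(c * V t))
    (T := T) (fun s hs => by have := hG_pos s hs; positivity) (continuousOn_const.mul hG_cont)
    (IntegrableOn.congr_fun (hG_int.const_mul (c * κ)⁻¹) (fun s _ => (mul_inv _ _).symm)
      measurableSet_Ioi)
    (by
      simp only [mul_inv, integral_const_mul]
      rw [← mul_inv, inv_mul_le_iff₀ (by positivity)]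
      exact hT)
    (fun t => Real.sqrt_nonneg _)
    (fun a ha b hb hab => Real.sqrt_le_sqrt (mul_le_mul_of_nonneg_left (hV_anti ha hb hab) hc.le))
    (fun t ht hpos => ⟨_, ((hV' t ht).const_mul c).sqrt (Real.sqrt_pos.1 hpos).ne', by
      rw [div_le_iff₀ (by positivity)]
      nlinarith [mul_le_mul_of_nonneg_left (hV'_le t ht) hc.le]⟩)
  intro t ht
  have h := Real.sqrt_eq_zero'.1 (hu t ht)
  nlinarith [hV_nonneg t]

/-- Theorem 3, position part: after the velocity observation error has
vanished, the position observation error of the distributed fixed-time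
observer converges to the origin before the predefined time `T_c` and stays
there. -/
theorem observer_position_fixed_time
    (N : ℕ) (hN : 1 ≤ N) (M : Matrix (Fin N) (Fin N) ℝ) (hsymm : M.IsSymm)
    (lam : ℝ) (hlam : 0 < lam)
    (hquad : ∀ y : Fin N → ℝ, lam * (y ⬝ᵥ y) ≤ y ⬝ᵥ M.mulVec y)
    (α β k p q : ℝ) (hα : 0 < α) (hβ : 0 < β) (hk : 0 < k)
    (hp : 0 < p) (hpq : p < q) (hkp : k * p < 1) (hkq : 1 < k * q)
    (γ : ℝ)
    (hγ : γ = Real.Gamma ((1 - k * p) / (q - p)) * Real.Gamma ((k * q - 1) / (q - p)) /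
        (α ^ k * Real.Gamma k * (q - p)) * (α / β) ^ ((1 - k * p) / (q - p)))
    (Tc : ℝ) (hTc : 0 < Tc)
    (ζx : ℝ) (hζx : 0 ≤ ζx)
    (κs : Fin N → ℝ) (κx : ℝ) (hκs : ∀ i, κx ≤ κs i)
    (hκx : (N : ℝ) * γ / (lam * Tc) ≤ κx)
    (x : ℝ → Fin N → ℝ)
    (hderiv : ∀ t : ℝ, 0 ≤ t → ∀ i : Fin N,
      HasDerivAt (fun s => x s i)
        (-(κs i) * ((α * |M.mulVec (x t) i| ^ p + β * |M.mulVec (x t) i| ^ q) ^ k + ζx) *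
            Real.sign (M.mulVec (x t) i)) t) :
    ∀ t : ℝ, Tc ≤ t → x t = 0 := by
  have hN0 : (0 : ℝ) < N := by exact_mod_cast hN
  have : Nonempty (Fin N) := ⟨⟨0, hN⟩⟩
  have hq : 0 ≤ q := (hp.trans hpq).le
  have hγ_pos : 0 < γ := by
    have := sub_pos.2 hkp
    have := sub_pos.2 hkq
    have := sub_pos.2 hpq
    rw [hγ]; positivity
  have hκx0 : 0 < κx := lt_of_lt_of_le (by positivity) hκx
  have hV := fun t ht => exists_hasDerivAt_dotProduct_mulVec_self_le hsymm hlam hquad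
    (F := fun s => (α * s ^ p + β * s ^ q) ^ k) (fun s hs => by positivity)
    (monotoneOn_rpow_add_rpow_rpow_mul_self hα.le hβ.le hk.le hp.le hq) hκx0.le hκs hζx
    (hderiv t ht)
  simp only [Fintype.card_fin] at hV
  obtain ⟨hint, hval⟩ := integrableOn_inv_add_rpow_rpow_and_integral_eq hα hβ hpq hkp hkq
  have hT : ∫ s in Ioi (0 : ℝ), ((α * s ^ p + β * s ^ q) ^ k)⁻¹ ≤ lam / N * κx * Tc := by
    rw [div_le_iff₀ (by positivity)] at hκx
    rw [hval, ← hγ, div_mul_eq_mul_div, div_mul_eq_mul_div, le_div_iff₀ hN0]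
    linarith
  have hV_zero := eq_zero_of_hasDerivAt_le_neg_sqrt (div_pos hlam hN0) hκx0
    (fun s (hs : 0 < s) => by positivity)
    (continuous_rpow_add_rpow_rpow hk.le hp.le hq).continuousOn hint hT
    (fun t => dotProduct_mulVec_self_nonneg hquad hlam.le (x t)) hV
  exact fun t ht => eq_zero_of_dotProduct_mulVec_self_eq_zero hquad hlam (hV_zero t ht)
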